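/- Let G₁ be the presented group on generators β, π, t with the following relations (writing t₁ := βtβ⁻¹ and t₂ := β⁻¹tβ): [t,t₁] = 1, [t,t₂] = 1, [t,π] = 1; t₁π = πt₂ and t₂π = πt₁; π² = t·t₁⁻¹·t₂⁻¹; β³ = 1; and β = t·(β⁻¹πβ)·π. Then there exists a surjective group homomorphism φ from G₁ onto the symmetric group on three letters such that φ(t) = 1, φ(β) is a 3-cycle and φ(π) is a transposition, and the kernel of φ is free abelian of rank 3, freely generated by the images in G₁ of t, βtβ⁻¹ and β⁻¹tβ. (G₁ is the presentation of the stabilizer B_{v₁}, the mapping class group of the 3-holed sphere, as an extension of the symmetric group S₃ by ℤ³.) -/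

import Mathlib

/-!
The elements `t, t₁, t₂` commute pairwise (`[t₁, t₂] = 1` is `[t, t₁] = 1` conjugated by `β`, using
`β³ = 1`), so they are the images of the standard basis under a homomorphism `ℤ³ → G₁` whose image
`K` they generate. Conjugation by `β` permutes them cyclically and conjugation by `π` fixes `t` and
swaps `t₁, t₂`, so `K` is normal. Modulo `K` the relations collapse to `β³ = π² = 1` and
`πβ = β²π`, so every element of `G₁ ⧸ K` is some `βⁱπʲ` with `i < 3`, `j < 2`. Sending `β` to a
3-cycle, `π` to a transposition and `t` to `1` defines `φ : G₁ → S₃`, which maps these six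
elements to the six distinct permutations; hence `φ` is onto and `ker φ = K`. Finally `ℤ³ → K` is
injective because `G₁` acts on `ℚ³` by affine maps with `t, t₁, t₂` acting as the unit
translations.
-/

namespace Stmt5

open scoped commutatorElement

/-- The generator `β`. -/
def b : FreeGroup (Fin 3) := FreeGroup.of 0

/-- The generator `π`. -/
def p : FreeGroup (Fin 3) := FreeGroup.of 1

/-- The generator `t`. -/
def t : FreeGroup (Fin 3) := FreeGroup.of 2

/-- `t₁ := βtβ⁻¹`. -/
def t1 : FreeGroup (Fin 3) := b * t * b⁻¹

/-- `t₂ := β⁻¹tβ`. -/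
def t2 : FreeGroup (Fin 3) := b⁻¹ * t * b

/-- Relators of `G₁`: `[t,t₁] = [t,t₂] = [t,π] = 1`; `t₁π = πt₂`; `t₂π = πt₁`;
`π² = t·t₁⁻¹·t₂⁻¹`; `β³ = 1`; `β = t·(β⁻¹πβ)·π`. -/
def rels : Set (FreeGroup (Fin 3)) :=
  {⁅t, t1⁆, ⁅t, t2⁆, ⁅t, p⁆,
   t1 * p * (p * t2)⁻¹, t2 * p * (p * t1)⁻¹,
   p ^ 2 * (t * t1⁻¹ * t2⁻¹)⁻¹,
   b ^ 3,
   b * (t * (b⁻¹ * p * b) * p)⁻¹}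

/-- `G₁`. -/
abbrev G₁ := PresentedGroup rels

/-- The image in `G₁` of a word in the free group on the generators. -/
def img : FreeGroup (Fin 3) →* G₁ := PresentedGroup.mk rels

end Stmt5

section CommutingFamily

variable {ι G : Type*} [Group G]

lemma MulEquiv.piMultiplicative_ofAdd_single [DecidableEq ι] (i : ι) :
    MulEquiv.piMultiplicative (fun _ => ℤ) (Multiplicative.ofAdd (Pi.single i 1)) =
      Pi.mulSingle i (Multiplicative.ofAdd 1) := by
  ext j
  by_cases h : j = i
  · subst h; simp
  · simp [h]

lemma MonoidHom.ext_multiplicative_pi [Finite ι] [DecidableEq ι] {M : Type*} [Monoid M]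
    {f f' : Multiplicative (ι → ℤ) →* M}
    (h : ∀ i, f (Multiplicative.ofAdd (Pi.single i 1)) =
      f' (Multiplicative.ofAdd (Pi.single i 1))) :
    f = f' := by
  set e := (MulEquiv.piMultiplicative fun _ : ι => ℤ).symm.toMonoidHom
  have he : Function.Surjective e := (MulEquiv.piMultiplicative _).symm.surjective
  refine (MonoidHom.cancel_right he).1 (MonoidHom.pi_ext fun i x => ?_)
  have := MonoidHom.ext_mint
    (f := (f.comp e).comp (MonoidHom.mulSingle (fun _ => Multiplicative ℤ) i))
    (g := (f'.comp e).comp (MonoidHom.mulSingle (fun _ => Multiplicative ℤ) i))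
    (by simpa [e, ← MulEquiv.piMultiplicative_ofAdd_single] using h i)
  exact DFunLike.congr_fun this x

lemma Pairwise.commute_zpowersHom {g : ι → G} (hg : Pairwise fun i j => Commute (g i) (g j)) :
    Pairwise fun i j => ∀ x y : Multiplicative ℤ,
      Commute (zpowersHom G (g i) x) (zpowersHom G (g j) y) :=
  fun _ _ hij _ _ => (hg hij).zpow_zpow _ _

variable [Fintype ι] (g : ι → G) (hg : Pairwise fun i j => Commute (g i) (g j))

def zpowersPiHom : Multiplicative (ι → ℤ) →* G :=
  (MonoidHom.noncommPiCoprod (fun i => zpowersHom G (g i)) hg.commute_zpowersHom).comp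
    (MulEquiv.piMultiplicative fun _ => ℤ).toMonoidHom

lemma zpowersPiHom_ofAdd_single [DecidableEq ι] (i : ι) :
    zpowersPiHom g hg (Multiplicative.ofAdd (Pi.single i 1)) = g i := by
  rw [zpowersPiHom, MonoidHom.comp_apply, MulEquiv.coe_toMonoidHom,
    MulEquiv.piMultiplicative_ofAdd_single, MonoidHom.noncommPiCoprod_mulSingle, zpowersHom_apply,
    toAdd_ofAdd, zpow_one]

lemma range_zpowersPiHom : (zpowersPiHom g hg).range = Subgroup.closure (Set.range g) := by
  rw [zpowersPiHom, MonoidHom.range_comp,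
    MonoidHom.range_eq_top.2 (MulEquiv.piMultiplicative _).surjective, ← MonoidHom.range_eq_map,
    MonoidHom.noncommPiCoprod_range, ← Set.iUnion_singleton_eq_range, Subgroup.closure_iUnion]
  simp only [Subgroup.range_zpowersHom, Subgroup.zpowers_eq_closure]

end CommutingFamily

lemma Subgroup.normal_closure_of_conj_image_eq {G : Type*} [Group G] {s S : Set G}
    (hs : Subgroup.closure s = ⊤) (h : ∀ g ∈ s, MulAut.conj g '' S = S) :
    (Subgroup.closure S).Normal := by
  rw [← Subgroup.normalizer_eq_top_iff, eq_top_iff, ← hs, Subgroup.closure_le]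
  exact fun g hg => Subgroup.normalizer_le_normalizer_closure S
    (Subgroup.mem_normalizer_iff_conj_image_eq.2 (h g hg))

lemma surjective_pow_mul_pow_of_closure_eq_top {Q : Type*} [Group Q] {x y : Q}
    (hgen : Subgroup.closure {x, y} = ⊤) (hx : x ^ 3 = 1) (hy : y ^ 2 = 1)
    (hyx : y * x = x ^ 2 * y) :
    Function.Surjective fun ij : Fin 3 × Fin 2 => x ^ (ij.1 : ℕ) * y ^ (ij.2 : ℕ) := by
  have hx₁ : x * (x * x) = 1 := by rw [← pow_three, hx]
  have hx₂ : ∀ z, x * (x * (x * z)) = z := fun z => by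
    rw [← mul_assoc, ← mul_assoc, ← pow_three', hx, one_mul]
  have hy₁ : y * y = 1 := by rw [← sq, hy]
  have hyx₁ : y * x = x * (x * y) := by rw [hyx, sq, mul_assoc]
  -- With these rules `simp` rewrites every word in `x, y` to its normal form `xⁱ * yʲ`, so it
  -- decides membership in the range by comparing normal forms.
  have step : ∀ z ∈ Set.range fun ij : Fin 3 × Fin 2 => x ^ (ij.1 : ℕ) * y ^ (ij.2 : ℕ),
      ∀ w ∈ ({x, y} : Set Q), z * w ∈ Set.range fun ij : Fin 3 × Fin 2 =>
        x ^ (ij.1 : ℕ) * y ^ (ij.2 : ℕ) := by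
    rintro _ ⟨⟨i, j⟩, rfl⟩ w (rfl | rfl) <;> fin_cases i <;> fin_cases j <;>
      simp [Prod.exists, Fin.exists_fin_succ, pow_succ, mul_assoc, hx₁, hx₂, hy₁, hyx₁]
  have hxi : x⁻¹ = x * x := by rw [inv_eq_iff_mul_eq_one, ← mul_assoc, ← hx₁, mul_assoc]
  have hyi : y⁻¹ = y := by rw [inv_eq_iff_mul_eq_one, hy₁]
  intro z
  induction (hgen ▸ Subgroup.mem_top z : z ∈ Subgroup.closure {x, y}) using
    Subgroup.closure_induction_right with
  | one => exact ⟨(0, 0), by simp⟩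
  | mul_right z _ w hw ih => exact step z ih w hw
  | mul_inv_cancel z _ w hw ih =>
    rcases hw with rfl | rfl
    · rw [hxi, ← mul_assoc]
      exact step _ (step z ih _ (.inl rfl)) _ (.inl rfl)
    · rw [hyi]
      exact step z ih _ (.inr rfl)

section Affine

variable {ι A : Type*} [AddCommGroup A]

def aff (σ : Equiv.Perm ι) (v : ι → A) : Equiv.Perm (ι → A) where
  toFun x i := x (σ⁻¹ i) + v i
  invFun y i := y (σ i) - v (σ i)
  left_inv x := by funext i; simp
  right_inv y := by funext i; simp

@[simp] lemma aff_apply (σ : Equiv.Perm ι) (v : ι → A) (x : ι → A) (i : ι) :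
    aff σ v x i = x (σ⁻¹ i) + v i := rfl

@[simp] lemma aff_mul_aff (σ τ : Equiv.Perm ι) (v w : ι → A) :
    aff σ v * aff τ w = aff (σ * τ) (fun i => w (σ⁻¹ i) + v i) := by
  ext x i
  simp [Equiv.Perm.mul_apply, add_assoc]

@[simp] lemma aff_inv (σ : Equiv.Perm ι) (v : ι → A) :
    (aff σ v)⁻¹ = aff σ⁻¹ (fun i => -v (σ i)) := by
  rw [inv_eq_iff_mul_eq_one, aff_mul_aff]
  ext x i
  simp

lemma aff_eq_one {σ : Equiv.Perm ι} {v : ι → A} (h : ∀ (x : ι → A) i, x (σ⁻¹ i) + v i = x i) :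
    aff σ v = 1 :=
  Equiv.ext fun x => funext (h x)

lemma aff_one_zero : aff (1 : Equiv.Perm ι) (0 : ι → A) = 1 :=
  aff_eq_one fun _ _ => by simp

def translationHom : Multiplicative (ι → A) →* Equiv.Perm (ι → A) where
  toFun v := aff 1 v.toAdd
  map_one' := aff_one_zero
  map_mul' u v := by ext; simp [add_comm]

@[simp] lemma translationHom_apply (v : Multiplicative (ι → A)) :
    translationHom v = aff 1 v.toAdd := rfl

lemma translationHom_injective :
    Function.Injective (translationHom : Multiplicative (ι → A) →* _) := fun u v h =>
  Multiplicative.toAdd.injective <| funext fun i => by simpa using congr_fun congr($h 0) i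

end Affine

namespace Stmt5

open scoped commutatorElement

local notation "B" => img b
local notation "P" => img p
local notation "T" => img t
local notation "T1" => img t1
local notation "T2" => img t2

lemma img_eq_one_of_mem {r : FreeGroup (Fin 3)} (hr : r ∈ rels) : img r = 1 :=
  (QuotientGroup.eq_one_iff r).2 (Subgroup.subset_normalClosure hr)

lemma img_eq_of_mul_inv_mem {u v : FreeGroup (Fin 3)} (h : u * v⁻¹ ∈ rels) : img u = img v := by
  rw [← mul_inv_eq_one, ← map_inv, ← map_mul]
  exact img_eq_one_of_mem h

lemma T1_eq : T1 = B * T * B⁻¹ := by simp [t1]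

lemma T2_eq : T2 = B⁻¹ * T * B := by simp [t2]

lemma commute_T_T1 : Commute T T1 := by
  simpa only [map_commutatorElement, commutatorElement_eq_one_iff_commute] using
    img_eq_one_of_mem (r := ⁅t, t1⁆) (by simp [rels])

lemma commute_T_T2 : Commute T T2 := by
  simpa only [map_commutatorElement, commutatorElement_eq_one_iff_commute] using
    img_eq_one_of_mem (r := ⁅t, t2⁆) (by simp [rels])

lemma commute_T_P : Commute T P := by
  simpa only [map_commutatorElement, commutatorElement_eq_one_iff_commute] using
    img_eq_one_of_mem (r := ⁅t, p⁆) (by simp [rels])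

lemma T1_mul_P : T1 * P = P * T2 := by
  simpa only [map_mul] using img_eq_of_mul_inv_mem (u := t1 * p) (v := p * t2) (by simp [rels])

lemma T2_mul_P : T2 * P = P * T1 := by
  simpa only [map_mul] using img_eq_of_mul_inv_mem (u := t2 * p) (v := p * t1) (by simp [rels])

lemma P_sq : P ^ 2 = T * T1⁻¹ * T2⁻¹ := by
  rw [← map_pow]
  simpa only [map_mul, map_inv] using
    img_eq_of_mul_inv_mem (u := p ^ 2) (v := t * t1⁻¹ * t2⁻¹) (by simp [rels])

lemma B_pow_three : B ^ 3 = 1 := by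
  rw [← map_pow]
  exact img_eq_one_of_mem (by simp [rels])

lemma B_eq : B = T * (B⁻¹ * P * B) * P := by
  simpa only [map_mul, map_inv] using
    img_eq_of_mul_inv_mem (u := b) (v := t * (b⁻¹ * p * b) * p) (by simp [rels])

lemma conj_B_T : B * T * B⁻¹ = T1 := T1_eq.symm

lemma conj_B_T1 : B * T1 * B⁻¹ = T2 := by
  have hB : B * B = B⁻¹ := by rw [← mul_eq_one_iff_eq_inv, ← pow_three', B_pow_three]
  calc B * T1 * B⁻¹ = (B * B) * T * (B * B)⁻¹ := by rw [T1_eq]; group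
    _ = T2 := by rw [hB, inv_inv, T2_eq]

lemma conj_B_T2 : B * T2 * B⁻¹ = T := by
  rw [T2_eq]; group

lemma conj_P_T : P * T * P⁻¹ = T := by
  rw [← commute_T_P.eq, mul_inv_cancel_right]

lemma conj_P_T1 : P * T1 * P⁻¹ = T2 := by
  rw [← T2_mul_P, mul_inv_cancel_right]

lemma conj_P_T2 : P * T2 * P⁻¹ = T1 := by
  rw [← T1_mul_P, mul_inv_cancel_right]

lemma commute_T1_T2 : Commute T1 T2 := by
  simpa only [MulAut.conj_apply, conj_B_T, conj_B_T1] using commute_T_T1.map (MulAut.conj B)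

lemma closure_T_B_P : Subgroup.closure {T, B, P} = ⊤ := by
  refine eq_top_iff.2 fun g _ => PresentedGroup.generated_by rels _ (fun j => ?_) g
  fin_cases j
  exacts [Subgroup.subset_closure (by right; left; rfl),
    Subgroup.subset_closure (by right; right; rfl), Subgroup.subset_closure (by left; rfl)]

def K : Subgroup G₁ := Subgroup.closure {T, T1, T2}

instance K_normal : K.Normal := by
  refine Subgroup.normal_closure_of_conj_image_eq closure_T_B_P ?_
  rintro g (rfl | rfl | rfl) <;>
    simp only [Set.image_insert_eq, Set.image_singleton, MulAut.conj_apply, commute_T_T1.eq,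
      commute_T_T2.eq, mul_inv_cancel_right, conj_B_T, conj_B_T1, conj_B_T2, conj_P_T, conj_P_T1,
      conj_P_T2] <;>
    exact Set.ext fun _ => by simp only [Set.mem_insert_iff, Set.mem_singleton_iff]; tauto

lemma mk_T : (T : G₁ ⧸ K) = 1 :=
  (QuotientGroup.eq_one_iff _).2 (Subgroup.subset_closure (by simp))

lemma mk_T1 : (T1 : G₁ ⧸ K) = 1 :=
  (QuotientGroup.eq_one_iff _).2 (Subgroup.subset_closure (by simp))

lemma mk_T2 : (T2 : G₁ ⧸ K) = 1 :=
  (QuotientGroup.eq_one_iff _).2 (Subgroup.subset_closure (by simp))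

lemma mk_B_pow_three : (B : G₁ ⧸ K) ^ 3 = 1 := by
  rw [← QuotientGroup.mk_pow, B_pow_three, QuotientGroup.mk_one]

lemma mk_P_sq : (P : G₁ ⧸ K) ^ 2 = 1 := by
  rw [← QuotientGroup.mk_pow, P_sq]
  simp [mk_T, mk_T1, mk_T2]

lemma mk_P_mul_mk_B : (P : G₁ ⧸ K) * B = (B : G₁ ⧸ K) ^ 2 * P := by
  have h : (B : G₁ ⧸ K) = (B : G₁ ⧸ K)⁻¹ * P * B * P := by
    simpa [mk_T, mul_assoc] using congrArg ((↑) : G₁ → G₁ ⧸ K) B_eq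
  calc (P : G₁ ⧸ K) * B = (P : G₁ ⧸ K) * B * (P * P) := by rw [← sq, mk_P_sq, mul_one]
    _ = (B : G₁ ⧸ K) * ((B : G₁ ⧸ K)⁻¹ * P * B * P) * P := by group
    _ = (B : G₁ ⧸ K) ^ 2 * P := by rw [← h, sq]

lemma closure_mk_B_mk_P : Subgroup.closure {(B : G₁ ⧸ K), (P : G₁ ⧸ K)} = ⊤ := by
  have := congrArg (Subgroup.map (QuotientGroup.mk' K)) closure_T_B_P
  rw [MonoidHom.map_closure, ← MonoidHom.range_eq_map,
    MonoidHom.range_eq_top.2 (QuotientGroup.mk'_surjective K)] at this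
  simpa only [Set.image_insert_eq, Set.image_singleton, QuotientGroup.mk'_apply, mk_T,
    Subgroup.closure_insert_one] using this

lemma φ_rels : ∀ r ∈ rels, FreeGroup.lift ![finRotate 3, Equiv.swap 1 2, 1] r = 1 := by
  intro r hr
  simp only [rels, Set.mem_insert_iff, Set.mem_singleton_iff] at hr
  rcases hr with rfl | rfl | rfl | rfl | rfl | rfl | rfl | rfl <;> decide

def φ : G₁ →* Equiv.Perm (Fin 3) := PresentedGroup.toGroup φ_rels

lemma φ_B : φ B = finRotate 3 := PresentedGroup.toGroup.of _

lemma φ_P : φ P = Equiv.swap 1 2 := PresentedGroup.toGroup.of _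

lemma φ_T : φ T = 1 := PresentedGroup.toGroup.of _

lemma K_le_ker_φ : K ≤ φ.ker := by
  rw [K, Subgroup.closure_le]
  rintro g (rfl | rfl | rfl) <;> simp [T1_eq, T2_eq, φ_T]

lemma bijective_finRotate_pow_mul_swap_pow :
    Function.Bijective fun ij : Fin 3 × Fin 2 =>
      finRotate 3 ^ (ij.1 : ℕ) * Equiv.swap (1 : Fin 3) 2 ^ (ij.2 : ℕ) := by
  decide

lemma φ_surjective : Function.Surjective φ := by
  intro σ
  obtain ⟨⟨i, j⟩, rfl⟩ := bijective_finRotate_pow_mul_swap_pow.2 σ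
  exact ⟨B ^ (i : ℕ) * P ^ (j : ℕ), by simp [φ_B, φ_P]⟩

lemma ker_φ : φ.ker = K := by
  refine le_antisymm (fun g hg => ?_) K_le_ker_φ
  obtain ⟨⟨i, j⟩, hij⟩ := surjective_pow_mul_pow_of_closure_eq_top closure_mk_B_mk_P
    mk_B_pow_three mk_P_sq mk_P_mul_mk_B (g : G₁ ⧸ K)
  have h := congrArg (QuotientGroup.lift K φ K_le_ker_φ) hij
  simp only [QuotientGroup.lift_mk, map_mul, map_pow, φ_B, φ_P, (MonoidHom.mem_ker).1 hg] at h
  obtain ⟨rfl, rfl⟩ : i = 0 ∧ j = 0 := Prod.ext_iff.1 <|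
    bijective_finRotate_pow_mul_swap_pow.1 (a₁ := (i, j)) (a₂ := (0, 0)) (by simpa using h)
  rw [← QuotientGroup.eq_one_iff]
  simpa using hij.symm

lemma pairwise_commute_T_T1_T2 :
    Pairwise fun i j => Commute (![T, T1, T2] i) (![T, T1, T2] j) := by
  intro i j hij
  fin_cases i <;> fin_cases j <;> simp_all [commute_T_T1, commute_T_T2, commute_T1_T2,
    commute_T_T1.symm, commute_T_T2.symm, commute_T1_T2.symm]

def ψ : Multiplicative (Fin 3 → ℤ) →* G₁ := zpowersPiHom ![T, T1, T2] pairwise_commute_T_T1_T2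

lemma ψ_ofAdd_single (i : Fin 3) : ψ (Multiplicative.ofAdd (Pi.single i 1)) = ![T, T1, T2] i :=
  zpowersPiHom_ofAdd_single _ _ i

lemma range_ψ : ψ.range = K := by
  rw [ψ, range_zpowersPiHom, K]
  congr 1
  ext
  simp [Matrix.range_cons]
  tauto

lemma finRotate_three_eq_swap_mul_swap : finRotate 3 = Equiv.swap 0 1 * Equiv.swap 1 2 := by decide

-- `π` acts as the swap of the last two coordinates followed by the translation by
-- `(1/2, -1/2, -1/2)`, half the translation by which `π² = t t₁⁻¹ t₂⁻¹` acts.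
lemma θ_rels : ∀ r ∈ rels, FreeGroup.lift
    ![aff (finRotate 3) 0, aff (Equiv.swap 1 2) ![1 / 2, -1 / 2, -1 / 2], aff 1 (Pi.single 0 1)] r
      = (1 : Equiv.Perm (Fin 3 → ℚ)) := by
  intro r hr
  simp only [rels, Set.mem_insert_iff, Set.mem_singleton_iff] at hr
  rcases hr with rfl | rfl | rfl | rfl | rfl | rfl | rfl | rfl <;>
  · simp only [b, p, t, t1, t2, commutatorElement_def, map_mul, map_inv,
      FreeGroup.lift_apply_of, Matrix.cons_val_zero, Matrix.cons_val_one, Matrix.cons_val_two,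
      Matrix.head_cons, Matrix.tail_cons, pow_succ, pow_zero, one_mul, aff_mul_aff, aff_inv]
    refine aff_eq_one fun x i => ?_
    fin_cases i <;>
      simp +decide [finRotate_three_eq_swap_mul_swap, Equiv.swap_apply_def, Pi.single_apply] <;>
      norm_num

def θ : G₁ →* Equiv.Perm (Fin 3 → ℚ) := PresentedGroup.toGroup θ_rels

lemma θ_B : θ B = aff (finRotate 3) 0 := PresentedGroup.toGroup.of _

lemma θ_T : θ T = aff 1 (Pi.single 0 1) := PresentedGroup.toGroup.of _

lemma θ_T_T1_T2 (i : Fin 3) : θ (![T, T1, T2] i) = aff 1 (Pi.single i 1) := by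
  fin_cases i
  · exact θ_T
  all_goals
    simp only [Fin.reduceFinMk, Matrix.cons_val_zero, Matrix.cons_val_one, Matrix.cons_val_two,
      Matrix.head_cons, Matrix.tail_cons, T1_eq, T2_eq, map_mul, map_inv, θ_B, θ_T, aff_mul_aff,
      aff_inv]
    congr 1
    · decide
    · funext j
      fin_cases j <;> simp +decide [finRotate_three_eq_swap_mul_swap, Equiv.swap_apply_def]

lemma θ_comp_ψ : θ.comp ψ =
    translationHom.comp (AddMonoidHom.compLeft (Int.castAddHom ℚ) (Fin 3)).toMultiplicative := by
  refine MonoidHom.ext_multiplicative_pi fun i => ?_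
  rw [MonoidHom.comp_apply, ψ_ofAdd_single, θ_T_T1_T2, MonoidHom.comp_apply, translationHom_apply]
  congr 1
  ext j
  simp [AddMonoidHom.compLeft, Pi.single_apply]

lemma ψ_injective : Function.Injective ψ := by
  refine Function.Injective.of_comp (f := θ) ?_
  rw [← MonoidHom.coe_comp, θ_comp_ψ, MonoidHom.coe_comp]
  exact translationHom_injective.comp fun u v h => Multiplicative.toAdd.injective <|
    funext fun i => Int.cast_injective (α := ℚ) (congr_fun (congrArg Multiplicative.toAdd h) i)

theorem extension_of_S3 :
    ∃ φ : G₁ →* Equiv.Perm (Fin 3),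
      Function.Surjective φ ∧
      φ (img t) = 1 ∧
      (φ (img b)).IsThreeCycle ∧
      (φ (img p)).IsSwap ∧
      ∃ ψ : Multiplicative (Fin 3 → ℤ) →* G₁,
        Function.Injective ψ ∧
        ψ.range = φ.ker ∧
        ψ (Multiplicative.ofAdd (Pi.single 0 1)) = img t ∧
        ψ (Multiplicative.ofAdd (Pi.single 1 1)) = img t1 ∧
        ψ (Multiplicative.ofAdd (Pi.single 2 1)) = img t2 := by
  refine ⟨φ, φ_surjective, φ_T, ?_, ?_, ψ, ψ_injective, range_ψ.trans ker_φ.symm,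
    ψ_ofAdd_single 0, ψ_ofAdd_single 1, ψ_ofAdd_single 2⟩
  · rw [φ_B]
    exact cycleType_finRotate
  · rw [φ_P]
    exact ⟨1, 2, by decide, rfl⟩

end Stmt5
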